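/- arXiv:1802.09060 — 3 statements merged into one kernel-verified Lean document; each statement's English description precedes it below -/
import Mathlib

section
/- Let C and D be sites such that the topology on D is generated by a pretopology, and let u : C ⥤ D be a functor which is (i) fully faithful, (ii) both continuous and cocontinuous for the given topologies, and (iii) cover-dense, i.e. every object V of D admits a covering family of the form {u(U_i) → V}_{i ∈ I} with each U_i an object of C. Then the morphism of topoi g : Sh(C) → Sh(D) induced by the cocontinuous functor u — whose direct image g_* is the pushforward of presheaves along u (which preserves sheaves) and whose inverse image g^* is the restriction functor G ↦ G ∘ u (which preserves sheaves since u is continuous) — is an equivalence of topoi; in particular g^* and g_* are quasi-inverse equivalences between the categories of sheaves of sets Sh(D) and Sh(C). -/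
open CategoryTheory Limits

namespace CategoryTheory.Functor

variable {C D : Type u} [SmallCategory C] [SmallCategory D]
  (J : GrothendieckTopology C) (K : GrothendieckTopology D) (u : C ⥤ D)

/-- Continuity makes `u` cover-preserving, and cocontinuity together with full faithfulness
gives the converse, since then `S` is the pullback of its own pushforward. -/
lemma isDenseSubsite_of_isContinuous_of_isCocontinuous [u.Full] [u.Faithful]
    [u.IsContinuous J K] [u.IsCocontinuous J K] [u.IsCoverDense K] :
    u.IsDenseSubsite J K where
  functorPushforward_mem_iff {_ S} :=
    ⟨fun hS ↦ Sieve.functorPullback_functorPushforward_eq u (S := S) ▸ u.cover_lift J K hS,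
      (CoverPreserving.of_isContinuous u J K).cover_preserve⟩

end CategoryTheory.Functor

/--
Let `C` and `D` be sites such that the topology on `D` is generated by a pretopology,
and let `u : C ⥤ D` be a functor which is fully faithful, continuous, cocontinuous and
cover-dense.  Then the morphism of topoi `g : Sh(C) → Sh(D)` induced by the cocontinuous
functor `u` — with `g_* = u.sheafPushforwardCocontinuous` the pushforward along `u` and
`g^* = u.sheafPushforwardContinuous` the restriction along `u` — is an equivalence of
topoi: `g^*` and `g_*` are quasi-inverse equivalences of the categories of sheaves of
sets.
-/
theorem stmt0 {C D : Type u} [SmallCategory C] [SmallCategory D] [HasPullbacks D]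
    (J : GrothendieckTopology C) (P : Pretopology D)
    (u : C ⥤ D) [u.Full] [u.Faithful]
    [u.IsContinuous J (Pretopology.toGrothendieck P)]
    [u.IsCocontinuous J (Pretopology.toGrothendieck P)]
    [u.IsCoverDense (Pretopology.toGrothendieck P)] :
    ∃ e : Sheaf (Pretopology.toGrothendieck P) (Type u) ≌ Sheaf J (Type u),
      e.functor = u.sheafPushforwardContinuous (Type u) J (Pretopology.toGrothendieck P) ∧
      e.inverse = u.sheafPushforwardCocontinuous (Type u) J (Pretopology.toGrothendieck P) := by
  have := u.isDenseSubsite_of_isContinuous_of_isCocontinuous J P.toGrothendieck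
  exact ⟨(u.sheafAdjunctionCocontinuous (Type u) J P.toGrothendieck).toEquivalence, rfl, rfl⟩
end

section
/- Let C and D be categories each equipped with a pretopology, and let u : C ⥤ D be a functor satisfying: (a) u preserves fiber products (pullbacks); (b) a family of morphisms {f_i : T_i → T}_{i ∈ I} in C is a covering family for the pretopology of C if and only if {u(f_i) : u(T_i) → u(T)}_{i ∈ I} is a covering family for the pretopology of D; and (c) for every object T of C and every morphism g : Z → u(T) in D, there exists a morphism h : T' → T in C and an isomorphism Z ≅ u(T') in D whose composition with u(h) equals g. Then u is both continuous and cocontinuous for the Grothendieck topologies generated by the two pretopologies. -/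
/-!
Continuity: since `u` preserves pullbacks, a factorization `f₁ ≫ u g₁ = f₂ ≫ u g₂` goes through
`u` of the pullback of `g₁, g₂`, so `u` is compatible-preserving; and it sends covering families
to covering families. Cocontinuity: lift each member `g` of a covering family of `u T` to some
`h : T' ⟶ T` with `u h ≅ g`; the image of the lifted family is the original family
precomposed with isomorphisms, hence covering, so the lifted family covers `T`.
-/

open CategoryTheory Limits

/-- The image of a family of morphisms `{f_i : T_i → T}` (a presieve `S` on `T`) under a
functor `u : C ⥤ D`: the family `{u(f_i) : u(T_i) → u(T)}` of morphisms with target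
`u(T)`. -/
def imageFamily {C D : Type*} [Category C] [Category D] (u : C ⥤ D) {T : C}
    (S : Presieve T) : Presieve (u.obj T) :=
  fun Z g => ∃ (W : C) (f : W ⟶ T), S f ∧ ∃ h : Z = u.obj W, g = eqToHom h ≫ u.map f

section

variable {C D : Type*} [Category C] [Category D]

lemma imageFamily_eq_map (u : C ⥤ D) {T : C} (S : Presieve T) : imageFamily u S = S.map u := by
  funext Z
  ext g
  rw [Presieve.map_iff]
  constructor
  · rintro ⟨W, f, hf, rfl, rfl⟩
    exact ⟨W, rfl, f, hf, by simp⟩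
  · rintro ⟨W, rfl, f, hf, hfg⟩
    exact ⟨W, f, hf, rfl, by simp [hfg]⟩

lemma compatiblePreserving_of_preservesPullbacks [HasPullbacks C] (K : GrothendieckTopology D)
    (u : C ⥤ D) [PreservesLimitsOfShape WalkingCospan u] : CompatiblePreserving K u := by
  constructor
  intro ℱ Z T x hx Y₁ Y₂ X f₁ f₂ g₁ g₂ hg₁ hg₂ hf
  obtain ⟨k, hk₁, hk₂⟩ :=
    PullbackCone.IsLimit.lift' (isLimitOfHasPullbackOfPreservesLimit u g₁ g₂) f₁ f₂ hf
  have hx₁₂ := hx (pullback.fst g₁ g₂) (pullback.snd g₁ g₂) hg₁ hg₂ pullback.condition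
  rw [← hk₁, ← hk₂, op_comp, op_comp, Functor.map_comp_apply, Functor.map_comp_apply]
  exact congrArg (ℱ.obj.map k.op) hx₁₂

namespace CategoryTheory.Pretopology

variable [HasPullbacks C] [HasPullbacks D]

lemma coverPreserving_toGrothendieck (KC : Pretopology C) (KD : Pretopology D) (u : C ⥤ D)
    (hu : ∀ (T : C) (S : Presieve T), S ∈ KC T → S.map u ∈ KD (u.obj T)) :
    CoverPreserving KC.toGrothendieck KD.toGrothendieck u where
  cover_preserve := fun ⟨R, hR, hRS⟩ ↦ ⟨R.map u, hu _ R hR,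
    (R.map_le_functorPushforward u).trans (Presieve.functorPushforward_monotone hRS)⟩

lemma ofArrows_iso_comp_mem (K : Pretopology D) {X : D} {R : Presieve X} (hR : R ∈ K X)
    {Y : R.category → D} (e : ∀ f, Y f ≅ f.obj.left) :
    Presieve.ofArrows Y (fun f ↦ (e f).hom ≫ f.obj.hom) ∈ K X := by
  convert K.transitive R (fun _ g hg ↦ Presieve.singleton (e (R.categoryMk g hg)).hom) hR
    fun _ _ _ ↦ K.has_isos _
  funext Z
  ext g
  constructor
  · rintro ⟨f⟩
    exact Presieve.bind_comp _ f.property (Presieve.singleton_self _)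
  · rintro ⟨W, _, g, hg, ⟨⟩, rfl⟩
    exact Presieve.ofArrows.mk (R.categoryMk g hg)

lemma isCocontinuous_toGrothendieck (KC : Pretopology C) (KD : Pretopology D) (u : C ⥤ D)
    (hu : ∀ (T : C) (S : Presieve T), S.map u ∈ KD (u.obj T) → S ∈ KC T)
    (hlift : ∀ (T : C) (Z : D) (g : Z ⟶ u.obj T),
      ∃ (T' : C) (h : T' ⟶ T) (e : Z ≅ u.obj T'), e.hom ≫ u.map h = g) :
    u.IsCocontinuous KC.toGrothendieck KD.toGrothendieck where
  cover_lift {U} S := by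
    rintro ⟨R, hR, hRS⟩
    choose T' h e he using fun f : R.category ↦ hlift U f.obj.left f.obj.hom
    have hmap : ∀ f, u.map (h f) = (e f).symm.hom ≫ f.obj.hom := fun f ↦
      (Iso.eq_inv_comp _).mpr (he f)
    refine ⟨Presieve.ofArrows T' h, hu U _ ?_, ?_⟩
    · rw [Presieve.map_ofArrows, funext hmap]
      exact ofArrows_iso_comp_mem KD hR _
    · rintro _ _ ⟨f⟩
      change S (u.map (h f))
      rw [hmap]
      exact S.downward_closed (hRS _ _ f.property) _

end CategoryTheory.Pretopology

end

/--
Let `C` and `D` be categories each equipped with a pretopology, and `u : C ⥤ D` a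
functor such that: (a) `u` preserves fiber products; (b) a family `{f_i : T_i → T}` is a
covering family in `C` iff `{u(f_i) : u(T_i) → u(T)}` is a covering family in `D`; and
(c) every morphism `g : Z → u(T)` of `D` factors as an isomorphism `Z ≅ u(T')` followed
by `u(h)` for some morphism `h : T' → T` of `C`.  Then `u` is continuous and
cocontinuous for the Grothendieck topologies generated by the two pretopologies.
-/
theorem stmt1 {C D : Type u} [SmallCategory C] [SmallCategory D]
    [HasPullbacks C] [HasPullbacks D]
    (KC : Pretopology C) (KD : Pretopology D) (u : C ⥤ D)
    [PreservesLimitsOfShape WalkingCospan u]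
    (hcov : ∀ (T : C) (S : Presieve T), S ∈ KC T ↔ imageFamily u S ∈ KD (u.obj T))
    (hfact : ∀ (T : C) (Z : D) (g : Z ⟶ u.obj T),
      ∃ (T' : C) (h : T' ⟶ T) (e : Z ≅ u.obj T'), e.hom ≫ u.map h = g) :
    u.IsContinuous (Pretopology.toGrothendieck KC) (Pretopology.toGrothendieck KD) ∧
    u.IsCocontinuous (Pretopology.toGrothendieck KC) (Pretopology.toGrothendieck KD) := by
  simp only [imageFamily_eq_map] at hcov
  exact ⟨Functor.isContinuous_of_coverPreserving
      (compatiblePreserving_of_preservesPullbacks _ u)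
      (Pretopology.coverPreserving_toGrothendieck KC KD u fun T S ↦ (hcov T S).1),
    Pretopology.isCocontinuous_toGrothendieck KC KD u (fun T S ↦ (hcov T S).2) hfact⟩
end

section
/- Let C be a category admitting fiber products, W a class of morphisms of C admitting a right calculus of fractions, and Q : C → C[W⁻¹] the localization functor. Then the localized category C[W⁻¹] admits fiber products, and Q preserves fiber products (the image under Q of a pullback square in C is a pullback square in C[W⁻¹]). -/
/-!
A morphism `L T ⟶ L X` of the localization is a right fraction `x ∘ s⁻¹` with `s ∈ W`, and by the
Ore condition two such fractions can be put over a common denominator. An equation `L u = L v`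
holds exactly when `w ≫ u = w ≫ v` for some `w ∈ W`. So a commuting square over `L f, L g` with
vertex `L T` comes, after shrinking `T` along an element of `W`, from a commuting square in `C`,
which factors through the pullback; uniqueness is obtained in the same way. Pullbacks exist in
`C[W⁻¹]` because every cospan there is, up to isomorphism, the image of a cospan of `C`.
-/

open CategoryTheory Limits

namespace CategoryTheory.Localization

open MorphismProperty

variable {C D : Type*} [Category C] [Category D] (L : C ⥤ D) (W : MorphismProperty C)
  [L.IsLocalization W] [W.HasRightCalculusOfFractions]

lemma exists_rightFraction_common_denominator {T X Y : C}
    (a : L.obj T ⟶ L.obj X) (b : L.obj T ⟶ L.obj Y) :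
    ∃ (T' : C) (s : T' ⟶ T) (_ : W s) (x : T' ⟶ X) (y : T' ⟶ Y),
      L.map s ≫ a = L.map x ∧ L.map s ≫ b = L.map y := by
  obtain ⟨φ, rfl⟩ := exists_rightFraction L W a
  obtain ⟨ψ, rfl⟩ := exists_rightFraction L W b
  obtain ⟨χ, hχ⟩ := (LeftFraction.mk φ.s ψ.s ψ.hs).exists_rightFraction
  refine ⟨χ.X', χ.s ≫ φ.s, W.comp_mem _ _ χ.hs φ.hs, χ.s ≫ φ.f, χ.f ≫ ψ.f, ?_, ?_⟩
  · rw [L.map_comp, Category.assoc, RightFraction.map_s_comp_map, L.map_comp]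
  · rw [hχ, L.map_comp, Category.assoc, RightFraction.map_s_comp_map, L.map_comp]

lemma exists_precomp_eq_of_map_eq_of_map_eq {Y Z Z' : C} {f₁ f₂ : Y ⟶ Z} {g₁ g₂ : Y ⟶ Z'}
    (hf : L.map f₁ = L.map f₂) (hg : L.map g₁ = L.map g₂) :
    ∃ (X : C) (s : X ⟶ Y) (_ : W s), s ≫ f₁ = s ≫ f₂ ∧ s ≫ g₁ = s ≫ g₂ := by
  obtain ⟨X, s, hs, hsf⟩ := (map_eq_iff_precomp L W f₁ f₂).1 hf
  have hsg : L.map (s ≫ g₁) = L.map (s ≫ g₂) := by rw [L.map_comp, L.map_comp, hg]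
  obtain ⟨X', t, ht, htg⟩ := (map_eq_iff_precomp L W _ _).1 hsg
  refine ⟨X', t ≫ s, W.comp_mem _ _ ht hs, ?_, ?_⟩
  · rw [Category.assoc, Category.assoc, hsf]
  · simpa only [Category.assoc] using htg

variable {X Y Z : C} {f : X ⟶ Z} {g : Y ⟶ Z} {c : PullbackCone f g}

include W in
lemma exists_lift_of_isLimit (hc : IsLimit c) {T : C} (a : L.obj T ⟶ L.obj X)
    (b : L.obj T ⟶ L.obj Y) (h : a ≫ L.map f = b ≫ L.map g) :
    ∃ l : L.obj T ⟶ L.obj c.pt, l ≫ L.map c.fst = a ∧ l ≫ L.map c.snd = b := by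
  obtain ⟨T', s, hs, x, y, hx, hy⟩ := exists_rightFraction_common_denominator L W a b
  have hxy : L.map (x ≫ f) = L.map (y ≫ g) := by
    rw [L.map_comp, L.map_comp, ← hx, ← hy, Category.assoc, Category.assoc, h]
  obtain ⟨T'', t, ht, htxy⟩ := (map_eq_iff_precomp L W _ _).1 hxy
  have := inverts L W _ (W.comp_mem _ _ ht hs)
  refine ⟨inv (L.map (t ≫ s)) ≫ L.map (PullbackCone.IsLimit.lift hc (t ≫ x) (t ≫ y)
    (by simpa only [Category.assoc] using htxy)), ?_, ?_⟩
  · rw [Category.assoc, ← L.map_comp, PullbackCone.IsLimit.lift_fst, IsIso.inv_comp_eq,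
      L.map_comp, L.map_comp, Category.assoc, hx]
  · rw [Category.assoc, ← L.map_comp, PullbackCone.IsLimit.lift_snd, IsIso.inv_comp_eq,
      L.map_comp, L.map_comp, Category.assoc, hy]

include W in
lemma hom_ext_of_isLimit (hc : IsLimit c) {T : C} {l₁ l₂ : L.obj T ⟶ L.obj c.pt}
    (h₁ : l₁ ≫ L.map c.fst = l₂ ≫ L.map c.fst) (h₂ : l₁ ≫ L.map c.snd = l₂ ≫ L.map c.snd) :
    l₁ = l₂ := by
  obtain ⟨T', s, hs, m₁, m₂, hm₁, hm₂⟩ := exists_rightFraction_common_denominator L W l₁ l₂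
  have e₁ : L.map (m₁ ≫ c.fst) = L.map (m₂ ≫ c.fst) := by
    rw [L.map_comp, L.map_comp, ← hm₁, ← hm₂, Category.assoc, Category.assoc, h₁]
  have e₂ : L.map (m₁ ≫ c.snd) = L.map (m₂ ≫ c.snd) := by
    rw [L.map_comp, L.map_comp, ← hm₁, ← hm₂, Category.assoc, Category.assoc, h₂]
  obtain ⟨T'', t, ht, ht₁, ht₂⟩ := exists_precomp_eq_of_map_eq_of_map_eq L W e₁ e₂
  have hm : L.map m₁ = L.map m₂ := (map_eq_iff_precomp L W _ _).2
    ⟨T'', t, ht, PullbackCone.IsLimit.hom_ext hc (by simpa only [Category.assoc] using ht₁)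
      (by simpa only [Category.assoc] using ht₂)⟩
  have := inverts L W _ hs
  rw [← cancel_epi (L.map s), hm₁, hm₂, hm]

include W in
noncomputable def isLimitPullbackConeMap (hc : IsLimit c) : IsLimit (c.map L) := by
  have := essSurj L W
  have hcond (s : PullbackCone (L.map f) (L.map g)) :
      ((L.objObjPreimageIso s.pt).hom ≫ s.fst) ≫ L.map f =
        ((L.objObjPreimageIso s.pt).hom ≫ s.snd) ≫ L.map g := by
    rw [Category.assoc, Category.assoc, s.condition]
  choose lift fac_fst fac_snd using fun s => exists_lift_of_isLimit L W hc _ _ (hcond s)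
  refine PullbackCone.IsLimit.mk _ (fun s => (L.objObjPreimageIso s.pt).inv ≫ lift s)
    (fun s => by simp [fac_fst]) (fun s => by simp [fac_snd]) (fun s m hm₁ hm₂ => ?_)
  rw [← cancel_epi (L.objObjPreimageIso s.pt).hom, Iso.hom_inv_id_assoc]
  exact hom_ext_of_isLimit L W hc (by simp [hm₁, fac_fst]) (by simp [hm₂, fac_snd])

include W in
lemma preservesLimit_cospan_of_isLimit (hc : IsLimit c) : PreservesLimit (cospan f g) L :=
  preservesLimit_of_preserves_limit_cone hc
    ((PullbackCone.isLimitMapConeEquiv c L).symm (isLimitPullbackConeMap L W hc))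

include W in
lemma preservesLimitsOfShape_walkingCospan [HasPullbacks C] :
    PreservesLimitsOfShape WalkingCospan L where
  preservesLimit {K} :=
    have := preservesLimit_cospan_of_isLimit L W (pullbackIsPullback (K.map WalkingCospan.Hom.inl)
      (K.map WalkingCospan.Hom.inr))
    preservesLimit_of_iso_diagram L (diagramIsoCospan K).symm

include W in
lemma exists_iso_comp_eq_map_comp {A T : D} {Z : C} (f' : A ⟶ T) (eZ : L.obj Z ≅ T) :
    ∃ (X : C) (f : X ⟶ Z) (eX : L.obj X ≅ A), eX.hom ≫ f' = L.map f ≫ eZ.hom := by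
  have := essSurj L W
  let eA := L.objObjPreimageIso A
  obtain ⟨φ, hφ⟩ := exists_rightFraction L W (eA.hom ≫ f' ≫ eZ.inv)
  refine ⟨φ.X', φ.f, isoOfHom L W φ.s φ.hs ≪≫ eA, ?_⟩
  rw [← φ.map_s_comp_map L (inverts L W), ← hφ]
  simp

include L W in
lemma hasPullbacks [HasPullbacks C] : HasPullbacks D := by
  have := essSurj L W
  have := preservesLimitsOfShape_walkingCospan L W
  refine @hasPullbacks_of_hasLimit_cospan _ _ fun {A B T f' g'} => ?_
  let eT := L.objObjPreimageIso T
  obtain ⟨X, f, eX, hf⟩ := exists_iso_comp_eq_map_comp L W f' eT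
  obtain ⟨Y, g, eY, hg⟩ := exists_iso_comp_eq_map_comp L W g' eT
  exact hasLimit_of_iso (cospanCompIso L f g ≪≫ cospanExt eX eY eT hf hg)

end CategoryTheory.Localization

/--
Let `C` be a category admitting fiber products, `W` a class of morphisms of `C`
admitting a right calculus of fractions, and `Q : C ⥤ C[W⁻¹]` the localization functor.
Then the localized category `C[W⁻¹]` admits fiber products, and `Q` preserves fiber
products (the image under `Q` of a pullback square in `C` is a pullback square in
`C[W⁻¹]`).
-/
theorem stmt7 {C : Type u} [Category.{v} C] [HasPullbacks C]
    (W : MorphismProperty C) [W.HasRightCalculusOfFractions] :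
    HasPullbacks W.Localization ∧ PreservesLimitsOfShape WalkingCospan W.Q :=
  ⟨Localization.hasPullbacks W.Q W, Localization.preservesLimitsOfShape_walkingCospan W.Q W⟩
end
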